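/- arXiv:math/0608257 — 5 statements merged into one kernel-verified Lean document; each statement's English description precedes it below -/
import Mathlib

section
/- Let X be a compact metric space and f : X → X a continuous, injective, positively expansive map (not necessarily surjective). Then X is finite. -/
/-- Every compact metric space that supports a continuous, injective, positively
expansive map (not necessarily surjective) is finite. -/
theorem compact_finite_of_injective_positively_expansive
    {X : Type*} [MetricSpace X] [CompactSpace X] (f : X → X)
    (hc : Continuous f) (hi : Function.Injective f)
    (hexp : ∃ ε > (0 : ℝ), ∀ x y : X, x ≠ y →
      ∃ k : ℕ, ε < dist (f^[k] x) (f^[k] y)) :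
    Finite X := by
  classical
  obtain ⟨ε, hε, hexp⟩ := hexp
  by_contra hfin
  rw [not_finite_iff_infinite] at hfin
  have hck : ∀ k : ℕ, Continuous (f^[k]) := fun k => hc.iterate k
  -- Step 1: uniform lemma: closeness at times 1..N forces closeness at time 0
  have step2 : ∃ N : ℕ, ∀ x y : X,
      (∀ k, 1 ≤ k → k ≤ N → dist (f^[k] x) (f^[k] y) ≤ ε) → dist x y ≤ ε := by
    by_contra h
    push_neg at h
    choose u v hu hd using h
    obtain ⟨a, φ, hφ, ha⟩ := CompactSpace.tendsto_subseq (fun n => (u n, v n))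
    have key1 : ∀ k, 1 ≤ k → dist (f^[k] a.1) (f^[k] a.2) ≤ ε := by
      intro k hk
      have hcont : Continuous fun p : X × X => dist (f^[k] p.1) (f^[k] p.2) :=
        ((hck k).comp continuous_fst).dist ((hck k).comp continuous_snd)
      refine le_of_tendsto ((hcont.tendsto a).comp ha) ?_
      filter_upwards [Filter.eventually_ge_atTop k] with i hik
      exact hu (φ i) k hk (hik.trans hφ.le_apply)
    have key2 : ε ≤ dist a.1 a.2 := by
      have hcont : Continuous fun p : X × X => dist p.1 p.2 :=
        continuous_fst.dist continuous_snd
      refine ge_of_tendsto ((hcont.tendsto a).comp ha) ?_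
      exact Filter.Eventually.of_forall fun i => (hd (φ i)).le
    have hne : a.1 ≠ a.2 := by
      intro h; rw [h, dist_self] at key2; linarith
    obtain ⟨k, hk⟩ := hexp (f a.1) (f a.2) (fun h => hne (hi h))
    rw [← Function.iterate_succ_apply, ← Function.iterate_succ_apply] at hk
    exact absurd hk (not_lt.mpr (key1 (k + 1) (Nat.succ_le_succ k.zero_le)))
  obtain ⟨N, hN⟩ := step2
  -- Step 2: a covering bound for (N, ε)-separated sets
  set Y := Fin (N + 1) → X with hY
  set g : X → Y := fun x k => f^[(k : ℕ)] x with hg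
  obtain ⟨t, -, htf, htcov⟩ :=
    finite_cover_balls_of_compact (isCompact_univ : IsCompact (Set.univ : Set Y))
      (by positivity : (0:ℝ) < ε / 2)
  have hcov : ∀ x : X, ∃ y ∈ t, g x ∈ Metric.ball y (ε / 2) := by
    intro x
    have := htcov (Set.mem_univ (g x))
    simpa using this
  choose c hct hcb using hcov
  set B := htf.toFinset.card with hB
  have bound : ∀ F : Finset X,
      (∀ x ∈ F, ∀ y ∈ F, x ≠ y → ∃ k ≤ N, ε < dist (f^[k] x) (f^[k] y)) →
      F.card ≤ B := by
    intro F hF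
    refine Finset.card_le_card_of_injOn c (fun x _ => htf.mem_toFinset.mpr (hct x)) ?_
    intro x hx y hy hcxy
    by_contra hxy
    obtain ⟨k, hkN, hkd⟩ := hF x hx y hy hxy
    have h1 : dist (g x) (g y) < ε := by
      calc dist (g x) (g y) ≤ dist (g x) (c x) + dist (c y) (g y) := by
            rw [hcxy]; exact dist_triangle _ _ _
        _ < ε / 2 + ε / 2 := by
            refine add_lt_add (Metric.mem_ball.mp (hcb x)) ?_
            rw [dist_comm]; exact Metric.mem_ball.mp (hcb y)
        _ = ε := by ring
    have h2 : dist (f^[k] x) (f^[k] y) ≤ dist (g x) (g y) :=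
      dist_le_pi_dist (g x) (g y) ⟨k, Nat.lt_succ_of_le hkN⟩
    linarith
  -- Step 3: descent
  have descent : ∀ m : ℕ, ∀ F : Finset X,
      (∀ x ∈ F, ∀ y ∈ F, x ≠ y → ∃ k ≤ N + m, ε < dist (f^[k] x) (f^[k] y)) →
      F.card ≤ B := by
    intro m
    induction m with
    | zero => exact fun F hF => bound F (by simpa using hF)
    | succ m ih =>
      intro F hF
      have hcard : (F.image f).card = F.card := Finset.card_image_of_injective F hi
      rw [← hcard]
      apply ih
      intro x' hx' y' hy' hne
      obtain ⟨x, hx, rfl⟩ := Finset.mem_image.mp hx'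
      obtain ⟨y, hy, rfl⟩ := Finset.mem_image.mp hy'
      have hxy : x ≠ y := fun h => hne (by rw [h])
      by_cases hcase : ∃ j, 1 ≤ j ∧ j ≤ N + (m + 1) ∧ ε < dist (f^[j] x) (f^[j] y)
      · obtain ⟨j, hj1, hj2, hjd⟩ := hcase
        refine ⟨j - 1, by omega, ?_⟩
        have : f^[j - 1] (f x) = f^[j] x := by
          rw [← Function.iterate_succ_apply]
          congr 1; omega
        have h2 : f^[j - 1] (f y) = f^[j] y := by
          rw [← Function.iterate_succ_apply]
          congr 1; omega
        rw [this, h2]; exact hjd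
      · exfalso
        push_neg at hcase
        have hle : dist x y ≤ ε := by
          refine hN x y fun k hk1 hk2 => ?_
          exact hcase k hk1 (by omega)
        obtain ⟨k, hkle, hkd⟩ := hF x hx y hy hxy
        rcases Nat.eq_zero_or_pos k with rfl | hk1
        · simp only [Function.iterate_zero, id] at hkd; linarith
        · exact absurd hkd (not_lt.mpr (hcase k hk1 hkle))
  -- Step 4: contradiction
  obtain ⟨F, hFcard⟩ := Infinite.exists_subset_card_eq X (B + 1)
  have huniform : ∃ n : ℕ, ∀ x ∈ F, ∀ y ∈ F, x ≠ y →
      ∃ k ≤ n, ε < dist (f^[k] x) (f^[k] y) := by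
    refine ⟨(F ×ˢ F).sup (fun p =>
      if h : p.1 ≠ p.2 then Nat.find (hexp p.1 p.2 h) else 0), ?_⟩
    intro x hx y hy hxy
    refine ⟨Nat.find (hexp x y hxy), ?_, Nat.find_spec (hexp x y hxy)⟩
    have hmem : (x, y) ∈ F ×ˢ F := Finset.mem_product.mpr ⟨hx, hy⟩
    have := Finset.le_sup (f := fun p : X × X =>
      if h : p.1 ≠ p.2 then Nat.find (hexp p.1 p.2 h) else 0) hmem
    simpa [hxy] using this
  obtain ⟨n, hn⟩ := huniform
  have : F.card ≤ B := descent n F fun x hx y hy hxy => by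
    obtain ⟨k, hk, hkd⟩ := hn x hx y hy hxy
    exact ⟨k, by omega, hkd⟩
  omega
end

section
/- Every compact metric space that supports a positively expansive homeomorphism is finite. That is, if X is a compact metric space and f : X → X is a homeomorphism that is positively expansive, then X is finite. -/
/-- Every compact metric space that supports a positively expansive homeomorphism
is finite. -/
theorem compact_finite_of_positively_expansive_homeo
    {X : Type*} [MetricSpace X] [CompactSpace X] (f : X ≃ₜ X)
    (hexp : ∃ ε > (0 : ℝ), ∀ x y : X, x ≠ y →
      ∃ k : ℕ, ε < dist ((f : X → X)^[k] x) ((f : X → X)^[k] y)) :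
    Finite X := by
  classical
  obtain ⟨ε, εpos, hexp⟩ := hexp
  set F : X → X := (f : X → X) with hF
  set G : X → X := (f.symm : X → X) with hG
  have hGF : Function.LeftInverse G F := f.symm_apply_apply
  have hFG : Function.LeftInverse F G := f.apply_symm_apply
  have hFGk : ∀ (k : ℕ) (x : X), F^[k] (G^[k] x) = x := fun k x => (hFG.iterate k) x
  have hGFk : ∀ (k : ℕ) (x : X), G^[k] (F^[k] x) = x := fun k x => (hGF.iterate k) x
  have hFcont : ∀ k : ℕ, Continuous (F^[k]) := fun k => f.continuous.iterate k
  have hFGle : ∀ (k j : ℕ) (x : X), k ≤ j → F^[k] (G^[j] x) = G^[j - k] x := by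
    intro k j x hkj
    conv_lhs => rw [show j = k + (j - k) by omega, Function.iterate_add_apply]
    exact hFGk k _
  -- contrapositive of expansiveness
  have key : ∀ x y : X, (∀ k : ℕ, dist (F^[k] x) (F^[k] y) ≤ ε) → x = y := by
    intro x y h
    by_contra hne
    obtain ⟨k, hk⟩ := hexp x y hne
    exact absurd (h k) (not_le.mpr hk)
  -- uniform expansiveness: long closeness of iterates 1..N forces closeness now
  have lemA : ∃ N : ℕ, ∀ x y : X,
      (∀ k : ℕ, 1 ≤ k → k ≤ N → dist (F^[k] x) (F^[k] y) ≤ ε) → dist x y ≤ ε / 2 := by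
    by_contra h
    push_neg at h
    choose x y hxy hd using h
    obtain ⟨⟨a, b⟩, -, φ, hφ, hconv⟩ := isCompact_univ.tendsto_subseq
      (x := fun n => (x n, y n)) (fun n => Set.mem_univ _)
    have hA : Filter.Tendsto (fun n => x (φ n)) Filter.atTop (nhds a) :=
      (continuous_fst.tendsto (a, b)).comp hconv
    have hB : Filter.Tendsto (fun n => y (φ n)) Filter.atTop (nhds b) :=
      (continuous_snd.tendsto (a, b)).comp hconv
    have hdistab : ε / 2 ≤ dist a b :=
      ge_of_tendsto' (hA.dist hB) (fun n => (hd (φ n)).le)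
    have hab : a = b := by
      have := key (F a) (F b) ?_
      · exact f.injective this
      intro k
      have hT : Filter.Tendsto (fun n => dist (F^[k + 1] (x (φ n))) (F^[k + 1] (y (φ n))))
          Filter.atTop (nhds (dist (F^[k + 1] a) (F^[k + 1] b))) :=
        (((hFcont (k + 1)).tendsto a).comp hA).dist (((hFcont (k + 1)).tendsto b).comp hB)
      have hle : dist (F^[k + 1] a) (F^[k + 1] b) ≤ ε := by
        refine le_of_tendsto hT ?_
        filter_upwards [Filter.eventually_ge_atTop (k + 1)] with n hn
        exact hxy (φ n) (k + 1) (Nat.le_add_left 1 k) (hn.trans (hφ.le_apply))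
      simpa only [← Function.iterate_succ_apply] using hle
    rw [hab] at hdistab
    simp only [dist_self] at hdistab
    linarith
  obtain ⟨N, hA⟩ := lemA
  -- uniform continuity of backward iterates up to N
  have lemδ : ∀ M : ℕ, ∃ δ > (0 : ℝ), ∀ x y : X, dist x y < δ →
      ∀ k ≤ M, dist (G^[k] x) (G^[k] y) ≤ ε / 2 := by
    intro M
    induction M with
    | zero =>
      refine ⟨ε / 2, by positivity, fun x y h k hk => ?_⟩
      interval_cases k
      simpa using h.le
    | succ n ih =>
      obtain ⟨δ, δpos, hδ⟩ := ih
      have hGuc : UniformContinuous G := CompactSpace.uniformContinuous_of_continuous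
        f.symm.continuous
      obtain ⟨δ', δ'pos, hδ'⟩ := Metric.uniformContinuous_iff.mp hGuc δ δpos
      refine ⟨min δ δ', lt_min δpos δ'pos, fun x y h k hk => ?_⟩
      rcases k with _ | j
      · exact hδ x y (h.trans_le (min_le_left _ _)) 0 (Nat.zero_le _)
      · rw [Function.iterate_succ_apply, Function.iterate_succ_apply]
        exact hδ (G x) (G y) (hδ' (h.trans_le (min_le_right _ _))) j (Nat.succ_le_succ_iff.mp hk)
  obtain ⟨δ, δpos, hδ⟩ := lemδ N
  -- backward orbits of δ-close points stay (ε/2)-close forever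
  have lemB : ∀ x y : X, dist x y < δ → ∀ j : ℕ, dist (G^[j] x) (G^[j] y) ≤ ε / 2 := by
    intro x y hxy j
    induction j using Nat.strong_induction_on with
    | _ j ih =>
      rcases le_or_gt j N with hj | hj
      · exact hδ x y hxy j hj
      · refine hA (G^[j] x) (G^[j] y) ?_
        intro k hk1 hkN
        have hkj : k ≤ j := hkN.trans hj.le
        rw [hFGle k j x hkj, hFGle k j y hkj]
        exact (ih (j - k) (by omega)).trans (by linarith)
  -- backward orbits of δ-close points get uniformly close
  have lemC : ∀ c : ℝ, 0 < c → ∃ M : ℕ, ∀ n ≥ M, ∀ x y : X, dist x y < δ →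
      dist (G^[n] x) (G^[n] y) < c := by
    intro c cpos
    by_contra h
    push_neg at h
    choose n hn x y hxy hd using h
    obtain ⟨⟨a, b⟩, -, φ, hφ, hconv⟩ := isCompact_univ.tendsto_subseq
      (x := fun M => (G^[n M] (x M), G^[n M] (y M))) (fun M => Set.mem_univ _)
    have hAt : Filter.Tendsto (fun M => G^[n (φ M)] (x (φ M))) Filter.atTop (nhds a) :=
      (continuous_fst.tendsto (a, b)).comp hconv
    have hBt : Filter.Tendsto (fun M => G^[n (φ M)] (y (φ M))) Filter.atTop (nhds b) :=
      (continuous_snd.tendsto (a, b)).comp hconv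
    have hdistab : c ≤ dist a b :=
      ge_of_tendsto' (hAt.dist hBt) (fun M => hd (φ M))
    have hab : a = b := by
      refine key a b ?_
      intro k
      have hT : Filter.Tendsto (fun M => dist (F^[k] (G^[n (φ M)] (x (φ M))))
          (F^[k] (G^[n (φ M)] (y (φ M))))) Filter.atTop
          (nhds (dist (F^[k] a) (F^[k] b))) :=
        (((hFcont k).tendsto a).comp hAt).dist (((hFcont k).tendsto b).comp hBt)
      refine le_of_tendsto hT ?_
      filter_upwards [Filter.eventually_ge_atTop k] with M hM
      have hkn : k ≤ n (φ M) := hM.trans ((hφ.le_apply).trans (hn (φ M)))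
      rw [hFGle k (n (φ M)) _ hkn, hFGle k (n (φ M)) _ hkn]
      exact (lemB _ _ (hxy (φ M)) _).trans (by linarith)
    rw [hab] at hdistab
    simp only [dist_self] at hdistab
    linarith
  -- conclusion via pigeonhole
  by_contra hfin
  rw [not_finite_iff_infinite] at hfin
  obtain ⟨t, -, tfin, tcover⟩ := finite_cover_balls_of_compact (isCompact_univ (X := X))
    (show (0 : ℝ) < δ / 2 by linarith)
  obtain ⟨s, hscard⟩ := Infinite.exists_subset_card_eq X (tfin.toFinset.card + 1)
  have hs2 : s.offDiag.Nonempty := by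
    have hcard : 1 < s.card := by
      rw [hscard]
      have : Nonempty X := inferInstance
      obtain ⟨z⟩ := this
      have hz := tcover (Set.mem_univ z)
      simp only [Set.mem_iUnion] at hz
      obtain ⟨p, hp, -⟩ := hz
      have : 0 < tfin.toFinset.card := by
        rw [Finset.card_pos]
        exact ⟨p, tfin.mem_toFinset.mpr hp⟩
      omega
    obtain ⟨a, ha, b, hb, hab⟩ := Finset.one_lt_card.mp hcard
    exact ⟨(a, b), Finset.mem_offDiag.mpr ⟨ha, hb, hab⟩⟩
  set c : ℝ := s.offDiag.inf' hs2 (fun p => dist p.1 p.2) with hc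
  have cpos : 0 < c := by
    rw [hc, Finset.lt_inf'_iff]
    rintro ⟨u, v⟩ huv
    rw [Finset.mem_offDiag] at huv
    exact dist_pos.mpr huv.2.2
  obtain ⟨M, hM⟩ := lemC c cpos
  have hmap : ∀ z : X, ∃ p ∈ tfin.toFinset, F^[M] z ∈ Metric.ball p (δ / 2) := by
    intro z
    have hz := tcover (Set.mem_univ (F^[M] z))
    simp only [Set.mem_iUnion] at hz
    obtain ⟨p, hp, hball⟩ := hz
    exact ⟨p, tfin.mem_toFinset.mpr hp, hball⟩
  choose P hPmem hPball using hmap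
  obtain ⟨z₁, hz₁, z₂, hz₂, hne, heq⟩ :=
    Finset.exists_ne_map_eq_of_card_lt_of_maps_to
      (show tfin.toFinset.card < s.card by rw [hscard]; exact Nat.lt_succ_self _)
      (fun z _ => hPmem z)
  have hclose : dist (F^[M] z₁) (F^[M] z₂) < δ := by
    have h1 := Metric.mem_ball.mp (hPball z₁)
    have h2 := Metric.mem_ball.mp (hPball z₂)
    rw [heq] at h1
    calc dist (F^[M] z₁) (F^[M] z₂)
        ≤ dist (F^[M] z₁) (P z₂) + dist (P z₂) (F^[M] z₂) := dist_triangle _ _ _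
      _ < δ / 2 + δ / 2 := by rw [dist_comm (P z₂)] ; exact add_lt_add h1 h2
      _ = δ := by ring
  have hlt : dist z₁ z₂ < c := by
    have := hM M (le_refl M) (F^[M] z₁) (F^[M] z₂) hclose
    rwa [hGFk M z₁, hGFk M z₂] at this
  have hge : c ≤ dist z₁ z₂ := by
    rw [hc]
    have hmem : (z₁, z₂) ∈ s.offDiag := Finset.mem_offDiag.mpr ⟨hz₁, hz₂, hne⟩
    exact Finset.inf'_le (fun p => dist p.1 p.2) hmem
  linarith
end

section
/- Let X be a compact metric space with metric d, f : X → X a continuous, injective, positively expansive map, and ε > 0 an expansive constant for f. Then there exists n ≥ 1 such that for all x, y ∈ X: if d(f^[i](x), f^[i](y)) ≤ ε for all i = 1, 2, …, n, then d(x, y) ≤ ε. -/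
/-- Condition (*): for a continuous injective positively expansive map on a compact
metric space with expansive constant ε, there is n ≥ 1 such that closeness along
steps 1..n forces closeness at step 0. -/
theorem exists_n_star_condition
    {X : Type*} [MetricSpace X] [CompactSpace X] (f : X → X)
    (hc : Continuous f) (hi : Function.Injective f)
    (ε : ℝ) (hε : 0 < ε)
    (hexp : ∀ x y : X, x ≠ y → ∃ k : ℕ, ε < dist (f^[k] x) (f^[k] y)) :
    ∃ n : ℕ, 1 ≤ n ∧ ∀ x y : X,
      (∀ i : ℕ, 1 ≤ i → i ≤ n → dist (f^[i] x) (f^[i] y) ≤ ε) →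
      dist x y ≤ ε := by
  by_contra h
  push_neg at h
  -- for each n, get bad points
  have hbad : ∀ n : ℕ, ∃ x y : X,
      (∀ i : ℕ, 1 ≤ i → i ≤ n + 1 → dist (f^[i] x) (f^[i] y) ≤ ε) ∧ ε < dist x y := by
    intro n
    obtain ⟨x, y, hxy, hd⟩ := h (n + 1) (Nat.le_add_left 1 n)
    exact ⟨x, y, hxy, hd⟩
  choose x y hxy hd using hbad
  -- extract convergent subsequences
  obtain ⟨a, φ, hφ, hxa⟩ := CompactSpace.tendsto_subseq x
  obtain ⟨b, ψ, hψ, hyb⟩ := CompactSpace.tendsto_subseq (fun n => y (φ n))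
  have hxa' : Filter.Tendsto (fun m => x (φ (ψ m))) Filter.atTop (nhds a) :=
    hxa.comp hψ.tendsto_atTop
  set u : ℕ → X := fun m => x (φ (ψ m)) with hu
  set v : ℕ → X := fun m => y (φ (ψ m)) with hv
  have hab : ε ≤ dist a b := by
    have := (hxa'.dist hyb)
    exact le_of_tendsto_of_tendsto tendsto_const_nhds this
      (Filter.Eventually.of_forall fun m => (hd (φ (ψ m))).le)
  have hne : a ≠ b := by
    intro hEq
    rw [hEq, dist_self] at hab
    linarith
  -- all iterates i ≥ 1 of a, b stay within ε
  have hiter : ∀ i : ℕ, 1 ≤ i → dist (f^[i] a) (f^[i] b) ≤ ε := by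
    intro i hi1
    have hcont : Continuous (f^[i]) := hc.iterate i
    have h1 : Filter.Tendsto (fun m => dist (f^[i] (u m)) (f^[i] (v m)))
        Filter.atTop (nhds (dist (f^[i] a) (f^[i] b))) :=
      ((hcont.tendsto a).comp hxa').dist ((hcont.tendsto b).comp hyb)
    refine le_of_tendsto h1 ?_
    filter_upwards [Filter.eventually_ge_atTop i] with m hm
    have hmono : i ≤ φ (ψ m) + 1 :=
      le_trans (le_trans hm (le_trans hψ.le_apply hφ.le_apply)) (Nat.le_succ _)
    exact hxy (φ (ψ m)) i hi1 hmono
  -- contradiction with expansiveness applied to (f a, f b)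
  obtain ⟨k, hk⟩ := hexp (f a) (f b) (fun hEq => hne (hi hEq))
  have : dist (f^[k + 1] a) (f^[k + 1] b) ≤ ε := hiter (k + 1) (Nat.le_add_left 1 k)
  rw [Function.iterate_succ_apply, Function.iterate_succ_apply] at this
  linarith
end

section
/- Let X be a compact metric space with metric d and f : X → X a continuous map that is positively expansive with expansive constant ε > 0. Suppose there exists n ≥ 1 such that for all x, y ∈ X: if d(f^[i](x), f^[i](y)) ≤ ε for all i = 1, …, n, then d(x, y) ≤ ε. Then X is finite. -/
/-- Uniform continuity of the first `n` iterates of a continuous map on a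
compact metric space. -/
lemma unif_cont_iterates_aux
    {X : Type*} [MetricSpace X] [CompactSpace X] (f : X → X)
    (hc : Continuous f) (ε : ℝ) (hε : 0 < ε) (n : ℕ) :
    ∃ δ > 0, ∀ u v : X, dist u v < δ → ∀ i ≤ n, dist (f^[i] u) (f^[i] v) ≤ ε := by
  induction n with
  | zero =>
    refine ⟨ε, hε, fun u v h i hi => ?_⟩
    interval_cases i
    simpa using h.le
  | succ n ih =>
    obtain ⟨δ, hδpos, hδ⟩ := ih
    have hcont : Continuous f^[n+1] := hc.iterate (n+1)
    have huc := CompactSpace.uniformContinuous_of_continuous hcont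
    rw [Metric.uniformContinuous_iff] at huc
    obtain ⟨δ', hδ'pos, hδ'⟩ := huc ε hε
    refine ⟨min δ δ', lt_min hδpos hδ'pos, fun u v h i hi => ?_⟩
    rcases Nat.lt_or_ge i (n+1) with hlt | hge
    · exact hδ u v (lt_of_lt_of_le h (min_le_left _ _)) i (by omega)
    · have : i = n + 1 := by omega
      subst this
      exact (hδ' (lt_of_lt_of_le h (min_le_right _ _))).le

/-- Compactness + positive expansiveness: orbits that stay `ε`-close for a long
time must start close. -/
lemma shrink_aux
    {X : Type*} [MetricSpace X] [CompactSpace X] (f : X → X)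
    (hc : Continuous f) (ε : ℝ)
    (hexp : ∀ x y : X, x ≠ y → ∃ k : ℕ, ε < dist (f^[k] x) (f^[k] y))
    (ρ : ℝ) (hρ : 0 < ρ) :
    ∃ m : ℕ, ∀ x y : X, (∀ i ≤ m, dist (f^[i] x) (f^[i] y) ≤ ε) → dist x y ≤ ρ := by
  by_contra hcon
  push_neg at hcon
  choose x y h1 h2 using hcon
  set z : ℕ → X × X := fun m => (x m, y m) with hz
  obtain ⟨a, -, φ, hφ, hlim⟩ :=
    (isCompact_univ : IsCompact (Set.univ : Set (X × X))).tendsto_subseq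
      (fun m => Set.mem_univ (z m))
  have hcont : ∀ i : ℕ, Continuous (fun p : X × X => dist (f^[i] p.1) (f^[i] p.2)) :=
    fun i => ((hc.iterate i).comp continuous_fst).dist ((hc.iterate i).comp continuous_snd)
  have hi : ∀ i : ℕ, dist (f^[i] a.1) (f^[i] a.2) ≤ ε := by
    intro i
    have htd : Filter.Tendsto (fun m => dist (f^[i] (z (φ m)).1) (f^[i] (z (φ m)).2))
        Filter.atTop (nhds (dist (f^[i] a.1) (f^[i] a.2))) :=
      ((hcont i).continuousAt.tendsto).comp hlim
    refine le_of_tendsto htd ?_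
    filter_upwards [Filter.eventually_ge_atTop i] with m hm
    exact h1 (φ m) i (le_trans hm (hφ.le_apply))
  have hd : ρ ≤ dist a.1 a.2 := by
    have htd : Filter.Tendsto (fun m => dist (z (φ m)).1 (z (φ m)).2)
        Filter.atTop (nhds (dist a.1 a.2)) :=
      ((hcont 0).continuousAt.tendsto).comp hlim |>.congr (by simp)
    refine ge_of_tendsto htd ?_
    filter_upwards with m
    exact (h2 (φ m)).le
  have hne : a.1 ≠ a.2 := by
    intro he
    rw [he, dist_self] at hd
    linarith
  obtain ⟨k, hk⟩ := hexp a.1 a.2 hne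
  exact absurd (hi k) (not_le.mpr hk)

/-- Condition (*) propagates `ε`-closeness backward along the orbit. -/
lemma backward_aux
    {X : Type*} [MetricSpace X] (f : X → X) (ε : ℝ) (n : ℕ)
    (hstar : ∀ x y : X,
      (∀ i : ℕ, 1 ≤ i → i ≤ n → dist (f^[i] x) (f^[i] y) ≤ ε) → dist x y ≤ ε)
    (P Q : X) (m : ℕ)
    (hwin : ∀ s ≤ n, dist (f^[m + s] P) (f^[m + s] Q) ≤ ε) :
    ∀ t ≤ m, dist (f^[t] P) (f^[t] Q) ≤ ε := by
  suffices H : ∀ j t, t + j = m → dist (f^[t] P) (f^[t] Q) ≤ ε by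
    intro t ht; exact H (m - t) t (by omega)
  intro j
  induction j using Nat.strong_induction_on with
  | _ j IH =>
    intro t ht
    rcases Nat.eq_zero_or_pos j with h0 | hj
    · subst h0
      have := hwin 0 (Nat.zero_le n)
      simpa [← ht] using this
    · apply hstar
      intro i hi1 hin
      have key : dist (f^[i + t] P) (f^[i + t] Q) ≤ ε := by
        rcases le_or_gt (i + t) m with hle | hgt
        · exact IH (m - (i + t)) (by omega) (i + t) (by omega)
        · have h2 := hwin (i + t - m) (by omega)
          have heq : m + (i + t - m) = i + t := by omega
          rwa [heq] at h2
      rwa [Function.iterate_add_apply f i t P, Function.iterate_add_apply f i t Q] at key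

/-- If a continuous positively expansive map with expansive constant ε on a compact
metric space satisfies condition (*) for some n ≥ 1, then the space is finite. -/
theorem finite_of_star_condition
    {X : Type*} [MetricSpace X] [CompactSpace X] (f : X → X)
    (hc : Continuous f) (ε : ℝ) (hε : 0 < ε)
    (hexp : ∀ x y : X, x ≠ y → ∃ k : ℕ, ε < dist (f^[k] x) (f^[k] y))
    (hstar : ∃ n : ℕ, 1 ≤ n ∧ ∀ x y : X,
      (∀ i : ℕ, 1 ≤ i → i ≤ n → dist (f^[i] x) (f^[i] y) ≤ ε) → dist x y ≤ ε) :
    Finite X := by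
  obtain ⟨n, hn, hstar⟩ := hstar
  obtain ⟨δ, hδpos, hδ⟩ := unif_cont_iterates_aux f hc ε hε n
  by_contra hfin
  haveI : Infinite X := not_finite_iff_infinite.mp hfin
  -- finite δ/2-net
  have htb : TotallyBounded (Set.univ : Set X) := isCompact_univ.totallyBounded
  rw [Metric.totallyBounded_iff] at htb
  obtain ⟨T, hTfin, hTcov⟩ := htb (δ/2) (by linarith)
  set L := hTfin.toFinset.card with hL
  -- L + 2 distinct points
  let e := Infinite.natEmbedding X
  set p : Fin (L + 2) → X := fun i => e i.val with hp
  have hpinj : Function.Injective p := by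
    intro i j h
    exact Fin.val_injective (e.injective h)
  -- minimal pairwise distance
  have hne01 : ((⟨0, by omega⟩ : Fin (L+2)), (⟨1, by omega⟩ : Fin (L+2))) ∈
      Finset.univ.filter (fun q : Fin (L+2) × Fin (L+2) => q.1 ≠ q.2) := by
    simp [Fin.ext_iff]
  obtain ⟨q₀, hq₀mem, hq₀min⟩ := Finset.exists_min_image
    (Finset.univ.filter (fun q : Fin (L+2) × Fin (L+2) => q.1 ≠ q.2))
    (fun q => dist (p q.1) (p q.2)) ⟨_, hne01⟩
  have hq₀ne : q₀.1 ≠ q₀.2 := (Finset.mem_filter.mp hq₀mem).2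
  set δ₀ := dist (p q₀.1) (p q₀.2) with hδ₀
  have hδ₀pos : 0 < δ₀ := dist_pos.mpr (fun h => hq₀ne (hpinj h))
  obtain ⟨m, hm⟩ := shrink_aux f hc ε hexp (δ₀/2) (by linarith)
  -- pigeonhole on the δ/2-net at time m
  have hcov : ∀ x : X, ∃ y ∈ hTfin.toFinset, dist x y < δ/2 := by
    intro x
    have := hTcov (Set.mem_univ x)
    simp only [Set.mem_iUnion, Metric.mem_ball] at this
    obtain ⟨y, hyT, hy⟩ := this
    exact ⟨y, hTfin.mem_toFinset.mpr hyT, hy⟩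
  choose c hcT hcd using hcov
  obtain ⟨i, -, j, -, hij, hgij⟩ :=
    Finset.exists_ne_map_eq_of_card_lt_of_maps_to
      (s := (Finset.univ : Finset (Fin (L+2)))) (t := hTfin.toFinset)
      (by simp [← hL]) (fun i _ => hcT (f^[m] (p i)))
  have hclose : dist (f^[m] (p i)) (f^[m] (p j)) < δ := by
    have h1 := hcd (f^[m] (p i))
    have h2 := hcd (f^[m] (p j))
    rw [hgij] at h1
    calc dist (f^[m] (p i)) (f^[m] (p j))
        ≤ dist (f^[m] (p i)) (c (f^[m] (p j))) + dist (f^[m] (p j)) (c (f^[m] (p j))) :=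
          dist_triangle_right _ _ _
      _ < δ/2 + δ/2 := add_lt_add h1 h2
      _ = δ := by ring
  have hwin : ∀ s ≤ n, dist (f^[m + s] (p i)) (f^[m + s] (p j)) ≤ ε := by
    intro s hs
    have := hδ _ _ hclose s hs
    rwa [← Function.iterate_add_apply, ← Function.iterate_add_apply,
      Nat.add_comm s m] at this
  have hall := backward_aux f ε n hstar (p i) (p j) m hwin
  have hfinal := hm (p i) (p j) (fun t ht => hall t ht)
  have hmin : δ₀ ≤ dist (p i) (p j) :=
    hq₀min (i, j) (Finset.mem_filter.mpr ⟨Finset.mem_univ _, hij⟩)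
  linarith
end

section
/- Let X be a compact metric space with metric d, f : X → X a continuous positively expansive map with expansive constant ε > 0, n ≥ 1, and suppose X is covered by N sets of the form U(z) = {x ∈ X : d(f^[i](x), f^[i](z)) ≤ ε/2 for i = 1, …, n}, and that for all x, y ∈ X: if d(f^[i](x), f^[i](y)) ≤ ε for all i = 1, …, n then d(x, y) ≤ ε. Then X has at most N points. -/
/-- If a compact metric space with a continuous positively expansive map (expansive
constant ε) satisfying condition (*) for n is covered by N sets of the form
U(z) = {x : dist (f^[i] x) (f^[i] z) ≤ ε/2 for i = 1,…,n}, then X has at most N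
points. -/
theorem card_le_of_cover
    {X : Type*} [MetricSpace X] [CompactSpace X] (f : X → X)
    (hc : Continuous f) (ε : ℝ) (hε : 0 < ε)
    (hexp : ∀ x y : X, x ≠ y → ∃ k : ℕ, ε < dist (f^[k] x) (f^[k] y))
    (n : ℕ) (hn : 1 ≤ n) (N : ℕ) (z : Fin N → X)
    (hcov : ∀ x : X, ∃ j : Fin N,
      ∀ i : ℕ, 1 ≤ i → i ≤ n → dist (f^[i] x) (f^[i] (z j)) ≤ ε / 2)
    (hstar : ∀ x y : X,
      (∀ i : ℕ, 1 ≤ i → i ≤ n → dist (f^[i] x) (f^[i] y) ≤ ε) → dist x y ≤ ε) :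
    ∀ s : Finset X, s.card ≤ N := by
  intro s
  by_contra hcard
  push_neg at hcard
  -- For every time m, some pair of distinct points of s has ε-close orbits at times m+1..m+n
  have key : ∀ m : ℕ, ∃ p : X × X, p.1 ∈ s ∧ p.2 ∈ s ∧ p.1 ≠ p.2 ∧
      ∀ i : ℕ, 1 ≤ i → i ≤ n → dist (f^[m + i] p.1) (f^[m + i] p.2) ≤ ε := by
    intro m
    have hlt : (Finset.univ : Finset (Fin N)).card < s.card := by simpa using hcard
    obtain ⟨x, hx, y, hy, hxy, hxy2⟩ :=
      Finset.exists_ne_map_eq_of_card_lt_of_maps_to (t := (Finset.univ : Finset (Fin N)))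
        (f := fun x => (hcov (f^[m] x)).choose) hlt (fun a _ => Finset.mem_univ _)
    refine ⟨(x, y), hx, hy, hxy, ?_⟩
    intro i h1 h2
    have hx' := (hcov (f^[m] x)).choose_spec i h1 h2
    have hy' := (hcov (f^[m] y)).choose_spec i h1 h2
    simp only [hxy2] at hx'
    have htri := dist_triangle (f^[i] (f^[m] x)) (f^[i] (z (hcov (f^[m] y)).choose))
      (f^[i] (f^[m] y))
    have e1 : f^[m + i] x = f^[i] (f^[m] x) := by
      rw [add_comm]; exact Function.iterate_add_apply f i m x
    have e2 : f^[m + i] y = f^[i] (f^[m] y) := by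
      rw [add_comm]; exact Function.iterate_add_apply f i m y
    rw [e1, e2]
    have := dist_comm (f^[i] (f^[m] y)) (f^[i] (z (hcov (f^[m] y)).choose))
    linarith
  choose p hp1 hp2 hne hw using key
  -- Pigeonhole over infinitely many times: one pair works for arbitrarily large m
  have hfin : Finite ((s ×ˢ s : Finset (X × X)) : Set (X × X)) := by
    exact (Finset.finite_toSet _)
  obtain ⟨q, hq⟩ := Finite.exists_infinite_fiber
    (fun m : ℕ => (⟨p m, by
      simp only [Finset.coe_product, Set.mem_prod]
      exact ⟨hp1 m, hp2 m⟩⟩ : ((s ×ˢ s : Finset (X × X)) : Set (X × X))))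
  rw [Set.infinite_coe_iff] at hq
  obtain ⟨m₀, hm₀⟩ := hq.nonempty
  have hab : q.1.1 ≠ q.1.2 := by
    have : p m₀ = q.1 := congrArg Subtype.val hm₀
    rw [← this]; exact hne m₀
  set a := q.1.1 with ha
  set b := q.1.2 with hb
  -- one-step downward propagation via hstar
  have step : ∀ t : ℕ, (∀ i, 1 ≤ i → i ≤ n → dist (f^[t+1+i] a) (f^[t+1+i] b) ≤ ε) →
      ∀ i, 1 ≤ i → i ≤ n → dist (f^[t+i] a) (f^[t+i] b) ≤ ε := by
    intro t H i h1 h2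
    rcases Nat.eq_or_lt_of_le h1 with h | h
    · -- i = 1 : use hstar at shifted points
      have hs := hstar (f^[t+1] a) (f^[t+1] b) (fun i' h1' h2' => by
        have e1 : f^[i'] (f^[t+1] a) = f^[t+1+i'] a := by
          rw [← Function.iterate_add_apply]; congr 1; omega
        have e2 : f^[i'] (f^[t+1] b) = f^[t+1+i'] b := by
          rw [← Function.iterate_add_apply]; congr 1; omega
        rw [e1, e2]; exact H i' h1' h2')
      have : t + i = t + 1 := by omega
      rw [this]; exact hs
    · have := H (i-1) (by omega) (by omega)
      have e : t + 1 + (i-1) = t + i := by omega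
      rwa [e] at this
  -- iterate downward propagation
  have down : ∀ j t : ℕ,
      (∀ i, 1 ≤ i → i ≤ n → dist (f^[t+j+i] a) (f^[t+j+i] b) ≤ ε) →
      ∀ i, 1 ≤ i → i ≤ n → dist (f^[t+i] a) (f^[t+i] b) ≤ ε := by
    intro j
    induction j with
    | zero => intro t H; simpa using H
    | succ j ih =>
      intro t H
      apply ih t
      apply step (t + j)
      intro i h1 h2
      have e : t + j + 1 + i = t + (j+1) + i := by omega
      rw [e]; exact H i h1 h2
  -- all iterates of a and b stay ε-close
  have claim : ∀ k : ℕ, dist (f^[k] a) (f^[k] b) ≤ ε := by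
    intro k
    obtain ⟨m, hmfib, hkm⟩ := hq.exists_gt k
    have hpm : p m = q.1 := congrArg Subtype.val hmfib
    have window : ∀ i, 1 ≤ i → i ≤ n → dist (f^[m+i] a) (f^[m+i] b) ≤ ε := by
      intro i h1 h2
      have := hw m i h1 h2
      rwa [hpm] at this
    -- get window at time k via `down`, then hstar at shift k
    have wk : ∀ i, 1 ≤ i → i ≤ n → dist (f^[k+i] a) (f^[k+i] b) ≤ ε := by
      apply down (m - k) k
      intro i h1 h2
      have e : k + (m - k) + i = m + i := by omega
      rw [e]; exact window i h1 h2
    have hs := hstar (f^[k] a) (f^[k] b) (fun i' h1' h2' => by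
      have e1 : f^[i'] (f^[k] a) = f^[k+i'] a := by
        rw [← Function.iterate_add_apply]; congr 1; omega
      have e2 : f^[i'] (f^[k] b) = f^[k+i'] b := by
        rw [← Function.iterate_add_apply]; congr 1; omega
      rw [e1, e2]; exact wk i' h1' h2')
    exact hs
  obtain ⟨k, hk⟩ := hexp a b hab
  linarith [claim k]
end
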